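/- arXiv:1902.08839 — 2 statements merged into one kernel-verified Lean document; each statement's English description precedes it below -/
import Mathlib

section
/- Let ȳ ∈ (0,∞] and let m be a minitive monotone measure on (X,𝒜), i.e., m(C∩D) = min(m(C), m(D)) for all C,D ∈ 𝒜. Let ⋆ : [0,ȳ]² → [0,ȳ] be nondecreasing and left-continuous with a ⋆ b ≤ min(a,b) for all a,b. Let φᵢ : [0,ȳ] → [0,ȳ] be increasing and right-continuous and ψᵢ : [0,φᵢ(ȳ)] → [0,ȳ] be nondecreasing and left-continuous for i=1,2,3, with φ₁(ȳ) = φ₂(ȳ) = φ₃(ȳ), ψ₁ ≥ ψ₂ and ψ₁ ≥ ψ₃ pointwise, and ψⱼ(φⱼ(x)) ≤ x ≤ ψ₁(φ₁(x)) for all x ∈ [0,ȳ] and j=2,3. Then the Chebyshev type inequality ψ₁(I_{∧,A∩B}(φ₁(f⋆g))) ≥ ψ₂(I_{∧,A}(φ₂(f))) ⋆ ψ₃(I_{∧,B}(φ₃(g))) holds for all A,B ∈ 𝒜 and all f,g ∈ F^ȳ. -/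
open Set ENNReal

noncomputable def uSugeno {X : Type*} (ybar : ℝ≥0∞) (op : ℝ≥0∞ → ℝ≥0∞ → ℝ≥0∞)
    (m : Set X → ℝ≥0∞) (D : Set X) (f : X → ℝ≥0∞) : ℝ≥0∞ :=
  ⨆ t ∈ Set.Iic ybar, op t (m (D ∩ {x | t ≤ f x}))

noncomputable def qInt {X : Type*} (oti : ℝ≥0∞ → ℝ≥0∞ → ℝ≥0∞)
    (m : Set X → ℝ≥0∞) (f : X → ℝ≥0∞) : ℝ≥0∞ :=
  ⨆ t ∈ Set.Iic (1 : ℝ≥0∞), oti (m {x | t ≤ f x}) t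

def Mono2On (op : ℝ≥0∞ → ℝ≥0∞ → ℝ≥0∞) (s t : Set ℝ≥0∞) : Prop :=
  ∀ ⦃a₁⦄, a₁ ∈ s → ∀ ⦃b₁⦄, b₁ ∈ t → ∀ ⦃a₂⦄, a₂ ∈ s → ∀ ⦃b₂⦄, b₂ ∈ t →
    a₁ ≤ a₂ → b₁ ≤ b₂ → op a₁ b₁ ≤ op a₂ b₂

def LeftContOn (g : ℝ≥0∞ → ℝ≥0∞) (s : Set ℝ≥0∞) : Prop :=
  ∀ x ∈ s, ContinuousWithinAt g (Set.Iic x) x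

def RightContOn (g : ℝ≥0∞ → ℝ≥0∞) (s : Set ℝ≥0∞) : Prop :=
  ∀ x ∈ s, ContinuousWithinAt g (Set.Ici x) x

def LeftCont2On (op : ℝ≥0∞ → ℝ≥0∞ → ℝ≥0∞) (s t : Set ℝ≥0∞) : Prop :=
  (∀ b ∈ t, ∀ a ∈ s, ContinuousWithinAt (fun x => op x b) (Set.Iic a) a) ∧
  (∀ a ∈ s, ∀ b ∈ t, ContinuousWithinAt (fun y => op a y) (Set.Iic b) b)

def mRange {X : Type*} [MeasurableSpace X] (m : Set X → ℝ≥0∞) : Set ℝ≥0∞ :=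
  {c | ∃ A : Set X, MeasurableSet A ∧ m A = c}

def MonotoneMeasure {X : Type*} [MeasurableSpace X] (m : Set X → ℝ≥0∞) : Prop :=
  m ∅ = 0 ∧ 0 < m Set.univ ∧
    ∀ ⦃A B : Set X⦄, MeasurableSet A → MeasurableSet B → A ⊆ B → m A ≤ m B

def IsCapacity {X : Type*} [MeasurableSpace X] (m : Set X → ℝ≥0∞) : Prop :=
  m ∅ = 0 ∧ m Set.univ = 1 ∧
    ∀ ⦃A B : Set X⦄, MeasurableSet A → MeasurableSet B → A ⊆ B → m A ≤ m B

def ComonotoneOn {X : Type*} (D : Set X) (f g : X → ℝ≥0∞) : Prop :=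
  ∀ x ∈ D, ∀ y ∈ D, f x < f y → g x ≤ g y

def IsSemicopula (S : ℝ≥0∞ → ℝ≥0∞ → ℝ≥0∞) : Prop :=
  Mono2On S (Set.Iic 1) (Set.Iic 1) ∧
    ∀ a ∈ Set.Iic (1 : ℝ≥0∞), S a 1 = a ∧ S 1 a = a

def MPosDep {X : Type*} (m : Set X → ℝ≥0∞) (tri : ℝ≥0∞ → ℝ≥0∞ → ℝ≥0∞)
    (k : ℝ≥0∞) (A B : Set X) (f g : X → ℝ≥0∞) : Prop :=
  ∀ α ∈ Set.Iic k, ∀ β ∈ Set.Iic k,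
    tri (m (A ∩ {x | α ≤ f x})) (m (B ∩ {x | β ≤ g x})) ≤
      m (A ∩ B ∩ {x | α ≤ f x} ∩ {x | β ≤ g x})


/-!
Fix `u` below `I_A(φ₂ ∘ f)` and `v` below `I_B(φ₃ ∘ g)`, witnessed by levels `t > u` and `s > v`.
On `{t ≤ φ₂ ∘ f} ∩ {s ≤ φ₃ ∘ g}` the inequalities `ψⱼ ∘ φⱼ ≤ id` give `ψ₂ u ≤ f` and `ψ₃ v ≤ g`,
so `φ₁ w ≤ φ₁ ∘ (f ⋆ g)` there, where `w = ψ₂ u ⋆ ψ₃ v`. By minitivity that set has measure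
`> min u v`, hence `min (φ₁ w) (min u v) ≤ I_{A∩B}(φ₁ ∘ (f ⋆ g))`, and `ψ₁` maps each of `φ₁ w`,
`u`, `v` above `w` (by `id ≤ ψ₁ ∘ φ₁`, `⋆ ≤ min` and `ψ₂, ψ₃ ≤ ψ₁`). Letting `u` and `v` increase,
left-continuity of `ψ₂`, `ψ₃` and `⋆` finishes the proof. The level sets of `f ⋆ g` are
measurable because a monotone, separately left-continuous `⋆` is jointly lower semicontinuous.
-/

section Order

variable {α β : Type*}

theorem apply_le_of_le_apply [Preorder α] [Preorder β] {φ : α → β} {ψ : β → α} {K : α}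
    (hφ : MonotoneOn φ (Iic K)) (hψ : MonotoneOn ψ (Iic (φ K)))
    (hψφ : ∀ x ∈ Iic K, ψ (φ x) ≤ x) {u : β} {y : α} (hy : y ≤ K) (hu : u ≤ φ y) :
    ψ u ≤ y :=
  (hψ (hu.trans (hφ hy le_rfl hy)) (hφ hy le_rfl hy) hu).trans (hψφ y hy)

variable [LinearOrder α] [TopologicalSpace α] [OrderTopology α] [DenselyOrdered α]
  [LinearOrder β] [TopologicalSpace β] [OrderClosedTopology β]

theorem exists_lt_lt_of_continuousWithinAt_Iic {F : α → β} {a a₀ : α} {y : β}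
    (hF : ContinuousWithinAt F (Iic a) a) (ha : a₀ < a) (hy : y < F a) :
    ∃ a' < a, y < F a' := by
  have := nhdsLT_neBot_of_exists_lt ⟨a₀, ha⟩
  exact (((hF.mono Iio_subset_Iic_self).eventually (eventually_gt_nhds hy)).and
    self_mem_nhdsWithin).exists.imp fun a' h => ⟨h.2, h.1⟩

theorem le_of_forall_lt_of_continuousWithinAt_Iic [OrderBot α] {F : α → β} {p : α} {C : β}
    (hF : ContinuousWithinAt F (Iic p) p) (hbot : F ⊥ ≤ C) (h : ∀ u < p, F u ≤ C) :
    F p ≤ C := by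
  rcases eq_or_ne p ⊥ with rfl | hp
  · exact hbot
  · have := nhdsLT_neBot_of_exists_lt ⟨⊥, bot_lt_iff_ne_bot.2 hp⟩
    exact le_of_tendsto (hF.mono Iio_subset_Iic_self) (eventually_nhdsWithin_of_forall h)

end Order

section Measurability

variable {X : Type*} [MeasurableSpace X]

theorem MonotoneOn.measurable_comp {φ : ℝ≥0∞ → ℝ≥0∞} {K : ℝ≥0∞} (hφ : MonotoneOn φ (Iic K))
    {f : X → ℝ≥0∞} (hf : Measurable f) (hfK : ∀ x, f x ≤ K) : Measurable fun x => φ (f x) := by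
  have hmono : Monotone fun y => φ (min y K) := fun y z hyz =>
    hφ (min_le_right y K) (min_le_right z K) (min_le_min_right K hyz)
  simpa only [Function.comp_def, min_eq_left (hfK _)] using hmono.measurable.comp hf

variable {ybar : ℝ≥0∞} {star : ℝ≥0∞ → ℝ≥0∞ → ℝ≥0∞}

/-- Clamping to `[0, ybar]` turns `star`, which is controlled only on that box, into a globally
defined function. -/
theorem lowerSemicontinuous_clamp_of_leftCont2On
    (hmono : Mono2On star (Iic ybar) (Iic ybar)) (hlc : LeftCont2On star (Iic ybar) (Iic ybar))
    (hle : ∀ a ∈ Iic ybar, ∀ b ∈ Iic ybar, star a b ≤ min a b) :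
    LowerSemicontinuous fun z : ℝ≥0∞ × ℝ≥0∞ => star (min z.1 ybar) (min z.2 ybar) := by
  rintro ⟨a, b⟩ y hy
  set a₀ := min a ybar
  set b₀ := min b ybar
  have ha₀ : a₀ ≤ ybar := min_le_right a ybar
  have hb₀ : b₀ ≤ ybar := min_le_right b ybar
  have hy₀ : y < min a₀ b₀ := hy.trans_le (hle a₀ ha₀ b₀ hb₀)
  obtain ⟨a', ha'a₀, hya'⟩ := exists_lt_lt_of_continuousWithinAt_Iic (hlc.1 b₀ hb₀ a₀ ha₀)
    (zero_le.trans_lt (lt_min_iff.1 hy₀).1) hy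
  have ha' : a' ≤ ybar := ha'a₀.le.trans ha₀
  obtain ⟨b', hb'b₀, hyb'⟩ := exists_lt_lt_of_continuousWithinAt_Iic (hlc.2 a' ha' b₀ hb₀)
    (zero_le.trans_lt (lt_min_iff.1 hy₀).2) hya'
  have hb' : b' ≤ ybar := hb'b₀.le.trans hb₀
  filter_upwards [prod_mem_nhds (Ioi_mem_nhds (ha'a₀.trans_le (min_le_left a ybar)))
    (Ioi_mem_nhds (hb'b₀.trans_le (min_le_left b ybar)))] with z hz
  exact hyb'.trans_le (hmono ha' hb' (mem_Iic.2 (min_le_right _ _))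
    (mem_Iic.2 (min_le_right _ _)) (le_min hz.1.le ha') (le_min hz.2.le hb'))

theorem measurable_comp₂_of_leftCont2On
    (hmono : Mono2On star (Iic ybar) (Iic ybar)) (hlc : LeftCont2On star (Iic ybar) (Iic ybar))
    (hle : ∀ a ∈ Iic ybar, ∀ b ∈ Iic ybar, star a b ≤ min a b)
    {f g : X → ℝ≥0∞} (hf : Measurable f) (hg : Measurable g)
    (hfy : ∀ x, f x ≤ ybar) (hgy : ∀ x, g x ≤ ybar) :
    Measurable fun x => star (f x) (g x) := by
  simpa only [Function.comp_def, min_eq_left (hfy _), min_eq_left (hgy _)] using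
    (lowerSemicontinuous_clamp_of_leftCont2On hmono hlc hle).measurable.comp (hf.prodMk hg)

end Measurability

section Sugeno

variable {X : Type*} {ybar : ℝ≥0∞} {m : Set X → ℝ≥0∞} {D : Set X} {h : X → ℝ≥0∞}

theorem le_uSugeno (op : ℝ≥0∞ → ℝ≥0∞ → ℝ≥0∞) {t : ℝ≥0∞} (ht : t ≤ ybar) :
    op t (m (D ∩ {x | t ≤ h x})) ≤ uSugeno ybar op m D h :=
  le_iSup₂ (f := fun t (_ : t ∈ Iic ybar) => op t (m (D ∩ {x | t ≤ h x}))) t ht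

theorem uSugeno_min_le (hm : m ∅ = 0) {K : ℝ≥0∞} (hK : ∀ x, h x ≤ K) :
    uSugeno ybar (fun a b => min a b) m D h ≤ K := by
  refine iSup₂_le fun t _ => ?_
  rcases le_or_gt t K with htK | hKt
  · exact (min_le_left _ _).trans htK
  · have hempty : {x | t ≤ h x} = ∅ :=
      eq_empty_of_forall_notMem fun x hx => (hK x).not_gt (hKt.trans_le hx)
    simp [hempty, hm]

theorem exists_lt_of_lt_uSugeno_min {u : ℝ≥0∞}
    (hu : u < uSugeno ybar (fun a b => min a b) m D h) :
    ∃ t, u < t ∧ u < m (D ∩ {x | t ≤ h x}) := by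
  simp only [uSugeno, lt_iSup_iff, lt_min_iff] at hu
  obtain ⟨t, -, ht⟩ := hu
  exact ⟨t, ht⟩

theorem min_le_uSugeno_inter [MeasurableSpace X] (hm : MonotoneMeasure m)
    (hm_min : ∀ C D : Set X, MeasurableSet C → MeasurableSet D → m (C ∩ D) = min (m C) (m D))
    {A B : Set X} (hA : MeasurableSet A) (hB : MeasurableSet B) {h₁ h₂ : X → ℝ≥0∞}
    (hh₁ : Measurable h₁) (hh₂ : Measurable h₂) (hh : Measurable h) {t s τ : ℝ≥0∞}
    (hτ : τ ≤ ybar) (hsub : ∀ x, t ≤ h₁ x → s ≤ h₂ x → τ ≤ h x) :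
    min τ (min (m (A ∩ {x | t ≤ h₁ x})) (m (B ∩ {x | s ≤ h₂ x}))) ≤
      uSugeno ybar (fun a b => min a b) m (A ∩ B) h := by
  have hC : MeasurableSet (A ∩ {x | t ≤ h₁ x}) := hA.inter (measurableSet_le measurable_const hh₁)
  have hD : MeasurableSet (B ∩ {x | s ≤ h₂ x}) := hB.inter (measurableSet_le measurable_const hh₂)
  have hE : MeasurableSet (A ∩ B ∩ {x | τ ≤ h x}) :=
    (hA.inter hB).inter (measurableSet_le measurable_const hh)
  have hCD : (A ∩ {x | t ≤ h₁ x}) ∩ (B ∩ {x | s ≤ h₂ x}) ⊆ A ∩ B ∩ {x | τ ≤ h x} := by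
    rintro x ⟨⟨hxA, hx₁⟩, hxB, hx₂⟩
    exact ⟨⟨hxA, hxB⟩, hsub x hx₁ hx₂⟩
  calc _ = min τ (m ((A ∩ {x | t ≤ h₁ x}) ∩ (B ∩ {x | s ≤ h₂ x}))) := by rw [hm_min _ _ hC hD]
    _ ≤ min τ (m (A ∩ B ∩ {x | τ ≤ h x})) := min_le_min_left _ (hm.2.2 (hC.inter hD) hE hCD)
    _ ≤ _ := le_uSugeno _ hτ

end Sugeno

theorem star_le_of_lt_uSugeno {X : Type*} [MeasurableSpace X] {ybar : ℝ≥0∞}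
    {m : Set X → ℝ≥0∞} (hm : MonotoneMeasure m)
    (hm_min : ∀ C D : Set X, MeasurableSet C → MeasurableSet D → m (C ∩ D) = min (m C) (m D))
    {star : ℝ≥0∞ → ℝ≥0∞ → ℝ≥0∞} (hstar_mono : Mono2On star (Iic ybar) (Iic ybar))
    (hstar_lc : LeftCont2On star (Iic ybar) (Iic ybar))
    (hstar_le : ∀ a ∈ Iic ybar, ∀ b ∈ Iic ybar, star a b ≤ min a b)
    {φ₁ φ₂ φ₃ ψ₁ ψ₂ ψ₃ : ℝ≥0∞ → ℝ≥0∞} (hφ₁_maps : MapsTo φ₁ (Iic ybar) (Iic ybar))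
    (hφ₁_mono : MonotoneOn φ₁ (Iic ybar)) (hφ₂_mono : MonotoneOn φ₂ (Iic ybar))
    (hφ₃_mono : MonotoneOn φ₃ (Iic ybar)) (hφ_eq₂ : φ₁ ybar = φ₂ ybar)
    (hφ_eq₃ : φ₁ ybar = φ₃ ybar) (hψ₁_mono : MonotoneOn ψ₁ (Iic (φ₁ ybar)))
    (hψ₂_maps : MapsTo ψ₂ (Iic (φ₂ ybar)) (Iic ybar)) (hψ₂_mono : MonotoneOn ψ₂ (Iic (φ₂ ybar)))
    (hψ₃_maps : MapsTo ψ₃ (Iic (φ₃ ybar)) (Iic ybar)) (hψ₃_mono : MonotoneOn ψ₃ (Iic (φ₃ ybar)))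
    (hψ₁₂ : ∀ x ∈ Iic (φ₁ ybar), ψ₂ x ≤ ψ₁ x) (hψ₁₃ : ∀ x ∈ Iic (φ₁ ybar), ψ₃ x ≤ ψ₁ x)
    (hψφ₂ : ∀ x ∈ Iic ybar, ψ₂ (φ₂ x) ≤ x) (hψφ₃ : ∀ x ∈ Iic ybar, ψ₃ (φ₃ x) ≤ x)
    (hψφ₁ : ∀ x ∈ Iic ybar, x ≤ ψ₁ (φ₁ x))
    {A B : Set X} (hA : MeasurableSet A) (hB : MeasurableSet B)
    {f g : X → ℝ≥0∞} (hf : Measurable f) (hg : Measurable g)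
    (hfy : ∀ x, f x ≤ ybar) (hgy : ∀ x, g x ≤ ybar) {u v : ℝ≥0∞}
    (hu : u < uSugeno ybar (fun a b => min a b) m A fun x => φ₂ (f x))
    (hv : v < uSugeno ybar (fun a b => min a b) m B fun x => φ₃ (g x)) :
    star (ψ₂ u) (ψ₃ v) ≤
      ψ₁ (uSugeno ybar (fun a b => min a b) m (A ∩ B) fun x => φ₁ (star (f x) (g x))) := by
  set T := uSugeno ybar (fun a b => min a b) m (A ∩ B) fun x => φ₁ (star (f x) (g x))
  have hfg : ∀ x, star (f x) (g x) ≤ ybar := fun x =>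
    (hstar_le _ (hfy x) _ (hgy x)).trans (min_le_of_left_le (hfy x))
  have hu₂ : u ≤ φ₂ ybar :=
    hu.le.trans (uSugeno_min_le hm.1 fun x => hφ₂_mono (hfy x) self_mem_Iic (hfy x))
  have hv₃ : v ≤ φ₃ ybar :=
    hv.le.trans (uSugeno_min_le hm.1 fun x => hφ₃_mono (hgy x) self_mem_Iic (hgy x))
  have hT : T ≤ φ₁ ybar := uSugeno_min_le hm.1 fun x => hφ₁_mono (hfg x) self_mem_Iic (hfg x)
  set w := star (ψ₂ u) (ψ₃ v)
  have ha : ψ₂ u ≤ ybar := hψ₂_maps hu₂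
  have hb : ψ₃ v ≤ ybar := hψ₃_maps hv₃
  have hwa : w ≤ ψ₂ u := (hstar_le _ ha _ hb).trans (min_le_left _ _)
  have hwb : w ≤ ψ₃ v := (hstar_le _ ha _ hb).trans (min_le_right _ _)
  have hw : w ≤ ybar := hwa.trans ha
  obtain ⟨t, hut, hum⟩ := exists_lt_of_lt_uSugeno_min hu
  obtain ⟨s, hvs, hvm⟩ := exists_lt_of_lt_uSugeno_min hv
  have hlevel : min (φ₁ w) (min u v) ≤ T := by
    refine (min_le_min_left _ (min_le_min hum.le hvm.le)).trans <|
      min_le_uSugeno_inter hm hm_min hA hB (hφ₂_mono.measurable_comp hf hfy)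
        (hφ₃_mono.measurable_comp hg hgy)
        (hφ₁_mono.measurable_comp
          (measurable_comp₂_of_leftCont2On hstar_mono hstar_lc hstar_le hf hg hfy hgy) hfg)
        (hφ₁_maps hw) fun x hx hy => ?_
    have hfx : ψ₂ u ≤ f x := apply_le_of_le_apply hφ₂_mono hψ₂_mono hψφ₂ (hfy x) (hut.le.trans hx)
    have hgx : ψ₃ v ≤ g x := apply_le_of_le_apply hφ₃_mono hψ₃_mono hψφ₃ (hgy x) (hvs.le.trans hy)
    exact hφ₁_mono hw (hfg x) (hstar_mono ha hb (hfy x) (hgy x) hfx hgx)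
  have hu₁ : u ≤ φ₁ ybar := hφ_eq₂ ▸ hu₂
  have hv₁ : v ≤ φ₁ ybar := hφ_eq₃ ▸ hv₃
  rcases (by simpa only [min_le_iff] using hlevel : φ₁ w ≤ T ∨ u ≤ T ∨ v ≤ T) with h | h | h
  · exact (hψφ₁ w hw).trans (hψ₁_mono (hφ₁_mono hw self_mem_Iic hw) hT h)
  · exact hwa.trans ((hψ₁₂ u hu₁).trans (hψ₁_mono hu₁ hT h))
  · exact hwb.trans ((hψ₁₃ v hv₁).trans (hψ₁_mono hv₁ hT h))

theorem statement16_general {X : Type*} [MeasurableSpace X]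
    (ybar : ℝ≥0∞)
    (m : Set X → ℝ≥0∞) (hm : MonotoneMeasure m)
    (hm_min : ∀ C D : Set X, MeasurableSet C → MeasurableSet D →
      m (C ∩ D) = min (m C) (m D))
    (star : ℝ≥0∞ → ℝ≥0∞ → ℝ≥0∞)
    (hstar_mono : Mono2On star (Set.Iic ybar) (Set.Iic ybar))
    (hstar_lc : LeftCont2On star (Set.Iic ybar) (Set.Iic ybar))
    (hstar_le : ∀ a ∈ Set.Iic ybar, ∀ b ∈ Set.Iic ybar, star a b ≤ min a b)
    (φ₁ φ₂ φ₃ ψ₁ ψ₂ ψ₃ : ℝ≥0∞ → ℝ≥0∞)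
    (hφ₁_maps : Set.MapsTo φ₁ (Set.Iic ybar) (Set.Iic ybar))
    (hφ₁_mono : StrictMonoOn φ₁ (Set.Iic ybar))
    (hφ₂_mono : StrictMonoOn φ₂ (Set.Iic ybar))
    (hφ₃_mono : StrictMonoOn φ₃ (Set.Iic ybar))
    (hφ_eq₂ : φ₁ ybar = φ₂ ybar) (hφ_eq₃ : φ₁ ybar = φ₃ ybar)
    (hψ₁_mono : MonotoneOn ψ₁ (Set.Iic (φ₁ ybar)))
    (hψ₂_maps : Set.MapsTo ψ₂ (Set.Iic (φ₂ ybar)) (Set.Iic ybar))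
    (hψ₂_mono : MonotoneOn ψ₂ (Set.Iic (φ₂ ybar)))
    (hψ₂_lc : LeftContOn ψ₂ (Set.Iic (φ₂ ybar)))
    (hψ₃_maps : Set.MapsTo ψ₃ (Set.Iic (φ₃ ybar)) (Set.Iic ybar))
    (hψ₃_mono : MonotoneOn ψ₃ (Set.Iic (φ₃ ybar)))
    (hψ₃_lc : LeftContOn ψ₃ (Set.Iic (φ₃ ybar)))
    (hψ₁₂ : ∀ x ∈ Set.Iic (φ₁ ybar), ψ₂ x ≤ ψ₁ x)
    (hψ₁₃ : ∀ x ∈ Set.Iic (φ₁ ybar), ψ₃ x ≤ ψ₁ x)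
    (hψφ₂ : ∀ x ∈ Set.Iic ybar, ψ₂ (φ₂ x) ≤ x)
    (hψφ₃ : ∀ x ∈ Set.Iic ybar, ψ₃ (φ₃ x) ≤ x)
    (hψφ₁ : ∀ x ∈ Set.Iic ybar, x ≤ ψ₁ (φ₁ x))
    (A B : Set X) (hA : MeasurableSet A) (hB : MeasurableSet B)
    (f g : X → ℝ≥0∞) (hf : Measurable f) (hg : Measurable g)
    (hfy : ∀ x, f x ≤ ybar) (hgy : ∀ x, g x ≤ ybar) :
    star (ψ₂ (uSugeno ybar (fun a b => min a b) m A fun x => φ₂ (f x)))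
         (ψ₃ (uSugeno ybar (fun a b => min a b) m B fun x => φ₃ (g x)))
      ≤ ψ₁ (uSugeno ybar (fun a b => min a b) m (A ∩ B) fun x => φ₁ (star (f x) (g x))) := by
  set p := uSugeno ybar (fun a b => min a b) m A fun x => φ₂ (f x)
  set q := uSugeno ybar (fun a b => min a b) m B fun x => φ₃ (g x)
  set T := uSugeno ybar (fun a b => min a b) m (A ∩ B) fun x => φ₁ (star (f x) (g x))
  have hp : p ≤ φ₂ ybar := uSugeno_min_le hm.1 fun x =>
    hφ₂_mono.monotoneOn (hfy x) self_mem_Iic (hfy x)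
  have hq : q ≤ φ₃ ybar := uSugeno_min_le hm.1 fun x =>
    hφ₃_mono.monotoneOn (hgy x) self_mem_Iic (hgy x)
  have key : ∀ u < p, ∀ v < q, star (ψ₂ u) (ψ₃ v) ≤ ψ₁ T := fun u hu v hv =>
    star_le_of_lt_uSugeno hm hm_min hstar_mono hstar_lc hstar_le hφ₁_maps hφ₁_mono.monotoneOn
      hφ₂_mono.monotoneOn hφ₃_mono.monotoneOn hφ_eq₂ hφ_eq₃ hψ₁_mono hψ₂_maps hψ₂_mono hψ₃_maps
      hψ₃_mono hψ₁₂ hψ₁₃ hψφ₂ hψφ₃ hψφ₁ hA hB hf hg hfy hgy hu hv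
  have hψ₂0 : ψ₂ 0 = 0 := nonpos_iff_eq_zero.1 <|
    apply_le_of_le_apply hφ₂_mono.monotoneOn hψ₂_mono hψφ₂ zero_le zero_le
  have hψ₃0 : ψ₃ 0 = 0 := nonpos_iff_eq_zero.1 <|
    apply_le_of_le_apply hφ₃_mono.monotoneOn hψ₃_mono hψφ₃ zero_le zero_le
  have hψ₂p : ψ₂ p ≤ ybar := hψ₂_maps hp
  have hzero : ∀ a ∈ Iic ybar, ∀ b ∈ Iic ybar, min a b = 0 → star a b ≤ ψ₁ T :=
    fun a ha b hb hab => (hstar_le a ha b hb).trans (hab ▸ zero_le)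
  have hp_limit : ∀ v < q, star (ψ₂ p) (ψ₃ v) ≤ ψ₁ T := fun v hv =>
    have hψ₃v : ψ₃ v ≤ ybar := hψ₃_maps (hv.le.trans hq)
    le_of_forall_lt_of_continuousWithinAt_Iic (F := fun u => star (ψ₂ u) (ψ₃ v))
      ((hstar_lc.1 _ hψ₃v _ hψ₂p).comp (hψ₂_lc p hp) fun u hu => hψ₂_mono (hu.trans hp) hp hu)
      (hzero _ (by simp [hψ₂0]) _ hψ₃v (by simp [hψ₂0])) fun u hu => key u hu v hv
  exact le_of_forall_lt_of_continuousWithinAt_Iic (F := fun v => star (ψ₂ p) (ψ₃ v))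
    ((hstar_lc.2 _ hψ₂p _ (hψ₃_maps hq)).comp (hψ₃_lc q hq) fun v hv =>
      hψ₃_mono (hv.trans hq) hq hv)
    (hzero _ hψ₂p _ (by simp [hψ₃0]) (by simp [hψ₃0])) hp_limit

theorem statement16 {X : Type*} [MeasurableSpace X]
    (ybar : ℝ≥0∞) (hybar : 0 < ybar)
    (m : Set X → ℝ≥0∞) (hm : MonotoneMeasure m)
    (hm_min : ∀ C D : Set X, MeasurableSet C → MeasurableSet D →
      m (C ∩ D) = min (m C) (m D))
    (star : ℝ≥0∞ → ℝ≥0∞ → ℝ≥0∞)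
    (hstar_maps : ∀ a ∈ Set.Iic ybar, ∀ b ∈ Set.Iic ybar, star a b ∈ Set.Iic ybar)
    (hstar_mono : Mono2On star (Set.Iic ybar) (Set.Iic ybar))
    (hstar_lc : LeftCont2On star (Set.Iic ybar) (Set.Iic ybar))
    (hstar_le : ∀ a ∈ Set.Iic ybar, ∀ b ∈ Set.Iic ybar, star a b ≤ min a b)
    (φ₁ φ₂ φ₃ ψ₁ ψ₂ ψ₃ : ℝ≥0∞ → ℝ≥0∞)
    (hφ₁_maps : Set.MapsTo φ₁ (Set.Iic ybar) (Set.Iic ybar))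
    (hφ₁_mono : StrictMonoOn φ₁ (Set.Iic ybar))
    (hφ₁_rc : RightContOn φ₁ (Set.Iic ybar))
    (hφ₂_maps : Set.MapsTo φ₂ (Set.Iic ybar) (Set.Iic ybar))
    (hφ₂_mono : StrictMonoOn φ₂ (Set.Iic ybar))
    (hφ₂_rc : RightContOn φ₂ (Set.Iic ybar))
    (hφ₃_maps : Set.MapsTo φ₃ (Set.Iic ybar) (Set.Iic ybar))
    (hφ₃_mono : StrictMonoOn φ₃ (Set.Iic ybar))
    (hφ₃_rc : RightContOn φ₃ (Set.Iic ybar))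
    (hφ_eq₂ : φ₁ ybar = φ₂ ybar) (hφ_eq₃ : φ₁ ybar = φ₃ ybar)
    (hψ₁_maps : Set.MapsTo ψ₁ (Set.Iic (φ₁ ybar)) (Set.Iic ybar))
    (hψ₁_mono : MonotoneOn ψ₁ (Set.Iic (φ₁ ybar)))
    (hψ₁_lc : LeftContOn ψ₁ (Set.Iic (φ₁ ybar)))
    (hψ₂_maps : Set.MapsTo ψ₂ (Set.Iic (φ₂ ybar)) (Set.Iic ybar))
    (hψ₂_mono : MonotoneOn ψ₂ (Set.Iic (φ₂ ybar)))
    (hψ₂_lc : LeftContOn ψ₂ (Set.Iic (φ₂ ybar)))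
    (hψ₃_maps : Set.MapsTo ψ₃ (Set.Iic (φ₃ ybar)) (Set.Iic ybar))
    (hψ₃_mono : MonotoneOn ψ₃ (Set.Iic (φ₃ ybar)))
    (hψ₃_lc : LeftContOn ψ₃ (Set.Iic (φ₃ ybar)))
    (hψ₁₂ : ∀ x ∈ Set.Iic (φ₁ ybar), ψ₂ x ≤ ψ₁ x)
    (hψ₁₃ : ∀ x ∈ Set.Iic (φ₁ ybar), ψ₃ x ≤ ψ₁ x)
    (hψφ₂ : ∀ x ∈ Set.Iic ybar, ψ₂ (φ₂ x) ≤ x)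
    (hψφ₃ : ∀ x ∈ Set.Iic ybar, ψ₃ (φ₃ x) ≤ x)
    (hψφ₁ : ∀ x ∈ Set.Iic ybar, x ≤ ψ₁ (φ₁ x))
    (A B : Set X) (hA : MeasurableSet A) (hB : MeasurableSet B)
    (f g : X → ℝ≥0∞) (hf : Measurable f) (hg : Measurable g)
    (hfy : ∀ x, f x ≤ ybar) (hgy : ∀ x, g x ≤ ybar) :
    star (ψ₂ (uSugeno ybar (fun a b => min a b) m A fun x => φ₂ (f x)))
         (ψ₃ (uSugeno ybar (fun a b => min a b) m B fun x => φ₃ (g x)))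
      ≤ ψ₁ (uSugeno ybar (fun a b => min a b) m (A ∩ B) fun x => φ₁ (star (f x) (g x))) :=
  statement16_general ybar m hm hm_min star hstar_mono hstar_lc hstar_le φ₁ φ₂ φ₃ ψ₁ ψ₂ ψ₃ hφ₁_maps
    hφ₁_mono hφ₂_mono hφ₃_mono hφ_eq₂ hφ_eq₃ hψ₁_mono hψ₂_maps hψ₂_mono hψ₂_lc hψ₃_maps hψ₃_mono
    hψ₃_lc hψ₁₂ hψ₁₃ hψφ₂ hψφ₃ hψφ₁ A B hA hB f g hf hg hfy hgy
end

section
/- Let m be a capacity on (X,𝒜) whose dual capacity m^d, defined by m^d(C) = 1 − m(X∖C), is subadditive, i.e., m^d(C∪D) ≤ m^d(C) + m^d(D) for all C,D ∈ 𝒜. Then for all A,B ∈ 𝒜, all 𝒜-measurable f,g : X → [0,∞] and all α,β ∈ [0,∞]: m(A∩B∩{f≥α}∩{g≥β}) ≥ max( m(A∩{f≥α}) + m(B∩{g≥β}) − 1, 0 ). In particular, every such pair of restrictions f|_A, g|_B is m-positively dependent with respect to the Łukasiewicz operation W(a,b) = max(a+b−1, 0). Consequently, the same conclusion holds whenever m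 is a supermodular capacity (m(C∪D) + m(C∩D) ≥ m(C) + m(D) for all C,D ∈ 𝒜). -/
open Set ENNReal

/-! Taking complements, subadditivity of the dual capacity says exactly that
`m C + m D ≤ 1 + m (C ∩ D)`, and supermodularity implies the same bound because `m (C ∪ D) ≤ 1`.
Applied to `C = A ∩ {α ≤ f}` and `D = B ∩ {β ≤ g}` this bound is the Łukasiewicz inequality. -/

theorem ENNReal.add_le_one_add_of_one_sub_le {a b c : ℝ≥0∞} (ha : a ≤ 1) (hb : b ≤ 1)
    (h : 1 - c ≤ (1 - a) + (1 - b)) : a + b ≤ 1 + c := by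
  refine (ENNReal.add_le_add_iff_right one_ne_top).mp ?_
  calc a + b + 1 ≤ a + b + (c + ((1 - a) + (1 - b))) := by gcongr; exact tsub_le_iff_left.mp h
    _ = ((1 - a) + a) + ((1 - b) + b) + c := by ring
    _ = 1 + c + 1 := by rw [tsub_add_cancel_of_le ha, tsub_add_cancel_of_le hb]; ring

namespace IsCapacity

variable {X : Type*} [MeasurableSpace X] {m : Set X → ℝ≥0∞}

theorem le_one (hm : IsCapacity m) {A : Set X} (hA : MeasurableSet A) : m A ≤ 1 :=
  hm.2.1 ▸ hm.2.2 hA MeasurableSet.univ (subset_univ A)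

theorem add_le_one_add_inter_of_dual_subadditive (hm : IsCapacity m)
    (hdual : ∀ C D : Set X, MeasurableSet C → MeasurableSet D →
      1 - m ((C ∪ D)ᶜ) ≤ (1 - m Cᶜ) + (1 - m Dᶜ)) :
    ∀ C D : Set X, MeasurableSet C → MeasurableSet D → m C + m D ≤ 1 + m (C ∩ D) := by
  intro C D hC hD
  have h := hdual Cᶜ Dᶜ hC.compl hD.compl
  rw [← compl_inter, compl_compl, compl_compl, compl_compl] at h
  exact ENNReal.add_le_one_add_of_one_sub_le (hm.le_one hC) (hm.le_one hD) h

theorem add_le_one_add_inter_of_supermodular (hm : IsCapacity m)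
    (hsuper : ∀ C D : Set X, MeasurableSet C → MeasurableSet D →
      m C + m D ≤ m (C ∪ D) + m (C ∩ D)) :
    ∀ C D : Set X, MeasurableSet C → MeasurableSet D → m C + m D ≤ 1 + m (C ∩ D) :=
  fun C D hC hD => (hsuper C D hC hD).trans (add_le_add_left (hm.le_one (hC.union hD)) _)

end IsCapacity

section Lukasiewicz

variable {X : Type*} [MeasurableSpace X] {m : Set X → ℝ≥0∞} {A B : Set X} {f g : X → ℝ≥0∞}

theorem lukasiewicz_le_measure_inter_superlevelSets
    (hm : ∀ C D : Set X, MeasurableSet C → MeasurableSet D → m C + m D ≤ 1 + m (C ∩ D))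
    (hA : MeasurableSet A) (hB : MeasurableSet B) (hf : Measurable f) (hg : Measurable g)
    (α β : ℝ≥0∞) :
    max (m (A ∩ {x | α ≤ f x}) + m (B ∩ {x | β ≤ g x}) - 1) 0
      ≤ m (A ∩ B ∩ {x | α ≤ f x} ∩ {x | β ≤ g x}) := by
  have hC : MeasurableSet (A ∩ {x | α ≤ f x}) := hA.inter (measurableSet_le measurable_const hf)
  have hD : MeasurableSet (B ∩ {x | β ≤ g x}) := hB.inter (measurableSet_le measurable_const hg)
  have hCD : A ∩ {x | α ≤ f x} ∩ (B ∩ {x | β ≤ g x}) = A ∩ B ∩ {x | α ≤ f x} ∩ {x | β ≤ g x} := by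
    ext x; simp only [mem_inter_iff]; tauto
  refine max_le (tsub_le_iff_left.mpr ?_) zero_le
  exact hCD ▸ hm _ _ hC hD

theorem mPosDep_lukasiewicz
    (hm : ∀ C D : Set X, MeasurableSet C → MeasurableSet D → m C + m D ≤ 1 + m (C ∩ D))
    (hA : MeasurableSet A) (hB : MeasurableSet B) (hf : Measurable f) (hg : Measurable g) :
    MPosDep m (fun a b => max (a + b - 1) 0) ⊤ A B f g :=
  fun α _ β _ => lukasiewicz_le_measure_inter_superlevelSets hm hA hB hf hg α β

end Lukasiewicz

theorem statement17 {X : Type*} [MeasurableSpace X]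
    (m : Set X → ℝ≥0∞) (hm : IsCapacity m) :
    ((∀ C D : Set X, MeasurableSet C → MeasurableSet D →
        1 - m ((C ∪ D)ᶜ) ≤ (1 - m Cᶜ) + (1 - m Dᶜ)) →
      (∀ A B : Set X, MeasurableSet A → MeasurableSet B →
        ∀ f g : X → ℝ≥0∞, Measurable f → Measurable g → ∀ α β : ℝ≥0∞,
          max (m (A ∩ {x | α ≤ f x}) + m (B ∩ {x | β ≤ g x}) - 1) 0
            ≤ m (A ∩ B ∩ {x | α ≤ f x} ∩ {x | β ≤ g x})) ∧
      (∀ A B : Set X, MeasurableSet A → MeasurableSet B →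
        ∀ f g : X → ℝ≥0∞, Measurable f → Measurable g →
          MPosDep m (fun a b => max (a + b - 1) 0) ⊤ A B f g))
    ∧
    ((∀ C D : Set X, MeasurableSet C → MeasurableSet D →
        m C + m D ≤ m (C ∪ D) + m (C ∩ D)) →
      (∀ A B : Set X, MeasurableSet A → MeasurableSet B →
        ∀ f g : X → ℝ≥0∞, Measurable f → Measurable g → ∀ α β : ℝ≥0∞,
          max (m (A ∩ {x | α ≤ f x}) + m (B ∩ {x | β ≤ g x}) - 1) 0
            ≤ m (A ∩ B ∩ {x | α ≤ f x} ∩ {x | β ≤ g x})) ∧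
      (∀ A B : Set X, MeasurableSet A → MeasurableSet B →
        ∀ f g : X → ℝ≥0∞, Measurable f → Measurable g →
          MPosDep m (fun a b => max (a + b - 1) 0) ⊤ A B f g)) := by
  constructor
  · intro hdual
    have hkey := hm.add_le_one_add_inter_of_dual_subadditive hdual
    exact ⟨fun A B hA hB f g hf hg => lukasiewicz_le_measure_inter_superlevelSets hkey hA hB hf hg,
      fun A B hA hB f g hf hg => mPosDep_lukasiewicz hkey hA hB hf hg⟩
  · intro hsuper
    have hkey := hm.add_le_one_add_inter_of_supermodular hsuper
    exact ⟨fun A B hA hB f g hf hg => lukasiewicz_le_measure_inter_superlevelSets hkey hA hB hf hg,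
      fun A B hA hB f g hf hg => mPosDep_lukasiewicz hkey hA hB hf hg⟩
end
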